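/- Let H ∈ (0,1) and B a real fBm. There exists a constant C (depending only on H) such that for all ε > 0 and all 0 ≤ s < t, |Cov(D⁰_ε B_t, D⁰_ε B_s)| ≤ C |t−s|^{2H−2}, where D⁰_ε B_t = (B_{t+ε} − B_{t−ε})/(2ε). -/

import Mathlib

open MeasureTheory

/-- Covariance function of real fractional Brownian motion with Hurst index `H`. -/
noncomputable def fbmCov (H s t : ℝ) : ℝ :=
  (|s| ^ (2 * H) + |t| ^ (2 * H) - |s - t| ^ (2 * H)) / 2

/-- `B` is a (two-sided) real fractional Brownian motion with Hurst index `H`: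
a centered Gaussian process with covariance `fbmCov H`, characterized by its
finite-dimensional characteristic functions. -/
def IsFBM1 {Ω : Type*} [MeasurableSpace Ω] (H : ℝ) (P : MeasureTheory.Measure Ω)
    (B : ℝ → Ω → ℝ) : Prop :=
  ∀ (n : ℕ) (t : Fin n → ℝ) (c : Fin n → ℝ),
    ∫ ω, Complex.exp (Complex.I * ((∑ i, c i * B (t i) ω : ℝ) : ℂ)) ∂P =
      Complex.exp (-(((∑ i, ∑ i', c i * c i' * fbmCov H (t i) (t i') : ℝ) : ℂ)) / 2)

/-
The characteristic functions in `IsFBM1` identify the law of every linear combination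
`∑ cᵢ B tᵢ` as the centred Gaussian with variance `∑ cᵢ cⱼ fbmCov H tᵢ tⱼ`; polarization then
gives `E[B a B b] = fbmCov H a b`. Hence the covariance of the two central differences is a second
difference of `|·|^(2H)`: with `u = t - s` and `δ = 2ε` it equals
`(|u + δ|^(2H) + |u - δ|^(2H) - 2 u^(2H)) / (2 δ²)`. Scaling by `u` reduces the bound to
`| |1 + x|^a + |1 - x|^a - 2 | ≤ 18 x²` for `0 ≤ a ≤ 2`: two mean value steps give it for
`|x| ≤ 1/2`, and for larger `|x|` each term is at most `9 x²`.
-/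

open ProbabilityTheory Set

lemma aemeasurable_of_forall_aestronglyMeasurable_cexp {Ω : Type*} [MeasurableSpace Ω]
    {μ : Measure Ω} {f : Ω → ℝ}
    (h : ∀ v : ℝ,
      AEStronglyMeasurable (fun ω => Complex.exp (Complex.I * ((v * f ω : ℝ) : ℂ))) μ) :
    AEMeasurable f μ := by
  -- `f` is the pointwise limit of `(n + 1) * sin (f / (n + 1)) = f * sinc (f / (n + 1))`.
  refine aemeasurable_of_tendsto_metrizable_ae'
    (f := fun (n : ℕ) ω => f ω * Real.sinc (1 / ((n : ℝ) + 1) * f ω)) (fun n => ?_)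
    (ae_of_all _ fun ω => ?_)
  · have hsin := (Complex.continuous_im.comp_aestronglyMeasurable
      (h (1 / ((n : ℝ) + 1)))).aemeasurable.const_mul ((n : ℝ) + 1)
    refine hsin.congr (ae_of_all _ fun ω => ?_)
    simp only [mul_comm Complex.I, Complex.exp_ofReal_mul_I_im]
    rcases eq_or_ne (f ω) 0 with h0 | h0
    · simp [h0]
    · rw [Real.sinc_of_ne_zero (by positivity)]
      field_simp
  · have hlim := (Real.continuous_sinc.tendsto 0).comp
      (by simpa using tendsto_one_div_add_atTop_nhds_zero_nat.mul_const (f ω))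
    simpa using hlim.const_mul (f ω)

lemma fbmCov_comm (H s t : ℝ) : fbmCov H s t = fbmCov H t s := by
  unfold fbmCov
  rw [abs_sub_comm]
  ring

namespace IsFBM1

variable {Ω : Type*} [MeasurableSpace Ω] {P : Measure Ω} {H : ℝ} {B : ℝ → Ω → ℝ} {n : ℕ}

lemma integrable_cexp (hB : IsFBM1 H P B) (t c : Fin n → ℝ) :
    Integrable (fun ω => Complex.exp (Complex.I * ((∑ i, c i * B (t i) ω : ℝ) : ℂ))) P := by
  by_contra h
  exact Complex.exp_ne_zero _ ((integral_undef h).symm.trans (hB n t c)).symm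

lemma aemeasurable_sum (hB : IsFBM1 H P B) (t c : Fin n → ℝ) :
    AEMeasurable (fun ω => ∑ i, c i * B (t i) ω) P := by
  refine aemeasurable_of_forall_aestronglyMeasurable_cexp fun v => ?_
  simpa [Finset.mul_sum, mul_assoc] using
    (hB.integrable_cexp t (fun i => v * c i)).aestronglyMeasurable

lemma charFun_map_sum (hB : IsFBM1 H P B) (t c : Fin n → ℝ) (v : ℝ) :
    charFun (P.map fun ω => ∑ i, c i * B (t i) ω) v =
      Complex.exp (-((v ^ 2 * ∑ i, ∑ j, c i * c j * fbmCov H (t i) (t j) : ℝ) : ℂ) / 2) := by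
  have hsum (ω : Ω) : ∑ i, v * c i * B (t i) ω = v * ∑ i, c i * B (t i) ω := by
    rw [Finset.mul_sum]
    exact Finset.sum_congr rfl fun i _ => by ring
  have hquad : ∑ i, ∑ j, v * c i * (v * c j) * fbmCov H (t i) (t j) =
      v ^ 2 * ∑ i, ∑ j, c i * c j * fbmCov H (t i) (t j) := by
    simp only [Finset.mul_sum]
    exact Finset.sum_congr rfl fun i _ => Finset.sum_congr rfl fun j _ => by ring
  have h := hB n t (fun i => v * c i)
  simp only [hsum, hquad] at h
  rw [charFun_apply_real, integral_map (hB.aemeasurable_sum t c) (by fun_prop), ← h]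
  congr 1 with ω
  push_cast
  ring_nf

variable [IsProbabilityMeasure P]

lemma sum_sum_mul_fbmCov_nonneg (hB : IsFBM1 H P B) (t c : Fin n → ℝ) :
    0 ≤ ∑ i, ∑ j, c i * c j * fbmCov H (t i) (t j) := by
  have := Measure.isProbabilityMeasure_map (hB.aemeasurable_sum t c)
  have h := norm_charFun_le_one (μ := P.map fun ω => ∑ i, c i * B (t i) ω) 1
  rw [hB.charFun_map_sum, Complex.norm_exp] at h
  simp only [neg_div, one_pow, one_mul, Complex.div_ofNat_re, Complex.neg_re, Complex.ofReal_re,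
    Real.exp_le_one_iff, Left.neg_nonpos_iff] at h
  linarith

lemma map_sum_eq_gaussianReal (hB : IsFBM1 H P B) (t c : Fin n → ℝ) :
    P.map (fun ω => ∑ i, c i * B (t i) ω) =
      gaussianReal 0 (∑ i, ∑ j, c i * c j * fbmCov H (t i) (t j)).toNNReal := by
  have := Measure.isProbabilityMeasure_map (hB.aemeasurable_sum t c)
  refine Measure.ext_of_charFun (funext fun v => ?_)
  rw [hB.charFun_map_sum, charFun_gaussianReal,
    Real.coe_toNNReal _ (hB.sum_sum_mul_fbmCov_nonneg t c)]
  congr 1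
  push_cast
  ring

lemma memLp_sum (hB : IsFBM1 H P B) (t c : Fin n → ℝ) :
    MemLp (fun ω => ∑ i, c i * B (t i) ω) 2 P := by
  have h := memLp_id_gaussianReal (μ := 0)
    (v := (∑ i, ∑ j, c i * c j * fbmCov H (t i) (t j)).toNNReal) 2
  rwa [← hB.map_sum_eq_gaussianReal t c,
    memLp_map_measure_iff aestronglyMeasurable_id (hB.aemeasurable_sum t c)] at h

lemma integral_sum_sq (hB : IsFBM1 H P B) (t c : Fin n → ℝ) :
    ∫ ω, (∑ i, c i * B (t i) ω) ^ 2 ∂P = ∑ i, ∑ j, c i * c j * fbmCov H (t i) (t j) := by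
  rw [← integral_map (f := fun x : ℝ => x ^ 2) (hB.aemeasurable_sum t c) (by fun_prop),
    hB.map_sum_eq_gaussianReal,
    ← variance_of_integral_eq_zero measurable_id'.aemeasurable integral_id_gaussianReal,
    variance_fun_id_gaussianReal, Real.coe_toNNReal _ (hB.sum_sum_mul_fbmCov_nonneg t c)]

lemma memLp_eval (hB : IsFBM1 H P B) (r : ℝ) : MemLp (B r) 2 P := by
  simpa using hB.memLp_sum (n := 1) (fun _ => r) (fun _ => 1)

lemma integral_mul (hB : IsFBM1 H P B) (a b : ℝ) :
    ∫ ω, B a ω * B b ω ∂P = fbmCov H a b := by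
  have hplus := hB.integral_sum_sq ![a, b] ![1, 1]
  have hminus := hB.integral_sum_sq ![a, b] ![1, -1]
  have iplus := (hB.memLp_sum ![a, b] ![1, 1]).integrable_sq
  have iminus := (hB.memLp_sum ![a, b] ![1, -1]).integrable_sq
  simp only [Fin.sum_univ_two, Matrix.cons_val_zero, Matrix.cons_val_one, one_mul,
    neg_one_mul, ← sub_eq_add_neg] at hplus hminus iplus iminus
  calc ∫ ω, B a ω * B b ω ∂P
      = (∫ ω, (B a ω + B b ω) ^ 2 ∂P - ∫ ω, (B a ω - B b ω) ^ 2 ∂P) / 4 := by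
        rw [← integral_sub iplus iminus, ← integral_div]
        congr 1 with ω
        ring
    _ = fbmCov H a b := by
        rw [hplus, hminus, fbmCov_comm H b a]
        ring

lemma integral_sub_mul_sub (hB : IsFBM1 H P B) (a b c d : ℝ) :
    ∫ ω, (B a ω - B b ω) * (B c ω - B d ω) ∂P =
      fbmCov H a c - fbmCov H a d - fbmCov H b c + fbmCov H b d := by
  have hint (x y : ℝ) : Integrable (fun ω => B x ω * B y ω) P :=
    (hB.memLp_eval x).integrable_mul (hB.memLp_eval y)
  calc ∫ ω, (B a ω - B b ω) * (B c ω - B d ω) ∂P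
      = ∫ ω, (B a ω * B c ω - B a ω * B d ω) - (B b ω * B c ω - B b ω * B d ω) ∂P := by
        congr 1 with ω
        ring
    _ = fbmCov H a c - fbmCov H a d - fbmCov H b c + fbmCov H b d := by
        rw [integral_sub (by exact (hint a c).sub (hint a d))
            (by exact (hint b c).sub (hint b d)),
          integral_sub (hint a c) (hint a d), integral_sub (hint b c) (hint b d),
          hB.integral_mul, hB.integral_mul, hB.integral_mul, hB.integral_mul]
        ring

end IsFBM1

section RpowSecondDifference

variable {a : ℝ}

lemma hasDerivAt_one_add_rpow {y : ℝ} (hy : -1 < y) :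
    HasDerivAt (fun y => (1 + y) ^ a) (a * (1 + y) ^ (a - 1)) y := by
  simpa using ((hasDerivAt_id y).const_add 1).rpow_const (p := a)
    (Or.inl (by simp only [id]; linarith))

lemma hasDerivAt_one_sub_rpow {y : ℝ} (hy : y < 1) :
    HasDerivAt (fun y => (1 - y) ^ a) (-(a * (1 - y) ^ (a - 1))) y := by
  simpa using ((hasDerivAt_id y).const_sub 1).rpow_const (p := a)
    (Or.inl (by simp only [id]; linarith))

lemma abs_one_add_rpow_sub_one_sub_rpow_le (ha : |a| ≤ 1) {y : ℝ}
    (hy : y ∈ Icc (0 : ℝ) (1 / 2)) :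
    |(1 + y) ^ a - (1 - y) ^ a| ≤ 5 * y := by
  have hderiv : ∀ z ∈ Icc (0 : ℝ) (1 / 2), HasDerivWithinAt (fun y => (1 + y) ^ a - (1 - y) ^ a)
      (a * ((1 + z) ^ (a - 1) + (1 - z) ^ (a - 1))) (Icc 0 (1 / 2)) z := fun z hz => by
    have h := (hasDerivAt_one_add_rpow (a := a) (y := z) (by linarith [hz.1])).sub
      (hasDerivAt_one_sub_rpow (a := a) (y := z) (by linarith [hz.2]))
    rw [sub_neg_eq_add, ← mul_add] at h
    exact h.hasDerivWithinAt
  have hbound :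
      ∀ z ∈ Ico (0 : ℝ) (1 / 2), ‖a * ((1 + z) ^ (a - 1) + (1 - z) ^ (a - 1))‖ ≤ 5 := by
    rintro z ⟨hz0, hz1⟩
    have hplus : (1 + z) ^ (a - 1) ≤ 1 :=
      Real.rpow_le_one_of_one_le_of_nonpos (by linarith) (by linarith [le_abs_self a])
    have hminus : (1 - z) ^ (a - 1) ≤ 4 :=
      calc (1 - z) ^ (a - 1) ≤ (1 / 2 : ℝ) ^ (a - 1) :=
            Real.rpow_le_rpow_of_nonpos (by norm_num) (by linarith) (by linarith [le_abs_self a])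
        _ ≤ (1 / 2 : ℝ) ^ (-2 : ℝ) :=
            Real.rpow_le_rpow_of_exponent_ge (by norm_num) (by norm_num)
              (by linarith [neg_abs_le a])
        _ = 4 := by norm_num [Real.rpow_neg, Real.rpow_two]
    have hnonneg : 0 ≤ (1 + z) ^ (a - 1) + (1 - z) ^ (a - 1) := by
      have := Real.rpow_nonneg (show (0 : ℝ) ≤ 1 + z by linarith) (a - 1)
      have := Real.rpow_nonneg (show (0 : ℝ) ≤ 1 - z by linarith) (a - 1)
      positivity
    rw [Real.norm_eq_abs, abs_mul, abs_of_nonneg hnonneg]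
    nlinarith [abs_nonneg a]
  simpa using norm_image_sub_le_of_norm_deriv_le_segment' hderiv hbound y hy

lemma abs_one_add_rpow_add_one_sub_rpow_sub_two_le (ha0 : 0 ≤ a) (ha2 : a ≤ 2) {x : ℝ}
    (hx : x ∈ Icc (0 : ℝ) (1 / 2)) :
    |(1 + x) ^ a + (1 - x) ^ a - 2| ≤ 10 * x ^ 2 := by
  have hsub : Icc 0 x ⊆ Icc (0 : ℝ) (1 / 2) := Icc_subset_Icc_right hx.2
  have hderiv : ∀ y ∈ Icc 0 x, HasDerivWithinAt (fun y => (1 + y) ^ a + (1 - y) ^ a - 2)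
      (a * ((1 + y) ^ (a - 1) - (1 - y) ^ (a - 1))) (Icc 0 x) y := fun y hy => by
    have h := ((hasDerivAt_one_add_rpow (a := a) (y := y) (by linarith [hy.1])).add
      (hasDerivAt_one_sub_rpow (a := a) (y := y) (by linarith [(hsub hy).2]))).sub_const 2
    rw [← sub_eq_add_neg, ← mul_sub] at h
    exact h.hasDerivWithinAt
  have hbound : ∀ y ∈ Ico 0 x, ‖a * ((1 + y) ^ (a - 1) - (1 - y) ^ (a - 1))‖ ≤ 10 * x := by
    intro y hy
    have h := abs_one_add_rpow_sub_one_sub_rpow_le (a := a - 1)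
      (abs_le.mpr ⟨by linarith, by linarith⟩) (hsub (Ico_subset_Icc_self hy))
    rw [Real.norm_eq_abs, abs_mul, abs_of_nonneg ha0]
    nlinarith [hy.2, abs_nonneg ((1 + y) ^ (a - 1) - (1 - y) ^ (a - 1))]
  have h := norm_image_sub_le_of_norm_deriv_le_segment' hderiv hbound x (right_mem_Icc.mpr hx.1)
  norm_num at h
  linarith

lemma abs_abs_one_add_rpow_add_abs_one_sub_rpow_sub_two_le (ha0 : 0 ≤ a) (ha2 : a ≤ 2)
    (x : ℝ) :
    |(|1 + x| ^ a + |1 - x| ^ a - 2)| ≤ 18 * x ^ 2 := by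
  wlog hx : 0 ≤ x generalizing x
  · simpa [sub_eq_add_neg, add_comm] using this (-x) (by linarith)
  rw [abs_of_nonneg (by linarith : 0 ≤ 1 + x)]
  rcases le_total x (1 / 2) with hsmall | hlarge
  · rw [abs_of_nonneg (by linarith : 0 ≤ 1 - x)]
    nlinarith [abs_one_add_rpow_add_one_sub_rpow_sub_two_le ha0 ha2 ⟨hx, hsmall⟩]
  · have hplus : (1 + x) ^ a ≤ 9 * x ^ 2 :=
      calc (1 + x) ^ a ≤ (3 * x) ^ a := Real.rpow_le_rpow (by linarith) (by linarith) ha0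
        _ ≤ (3 * x) ^ (2 : ℝ) := Real.rpow_le_rpow_of_exponent_le (by linarith) ha2
        _ = 9 * x ^ 2 := by rw [Real.rpow_two]; ring
    have hminus : |1 - x| ^ a ≤ (1 + x) ^ a :=
      Real.rpow_le_rpow (abs_nonneg _) (abs_le.mpr ⟨by linarith, by linarith⟩) ha0
    have := Real.rpow_nonneg (abs_nonneg (1 - x)) a
    rw [abs_le]
    constructor <;> nlinarith

lemma abs_abs_add_rpow_add_abs_sub_rpow_sub_two_mul_rpow_le (ha0 : 0 ≤ a) (ha2 : a ≤ 2)
    {u : ℝ} (hu : u ≠ 0) (δ : ℝ) :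
    |(|u + δ| ^ a + |u - δ| ^ a - 2 * |u| ^ a)| ≤ 18 * δ ^ 2 * |u| ^ (a - 2) := by
  have hu' : 0 < |u| := abs_pos.mpr hu
  have hscale (v : ℝ) : |u + v| ^ a = |u| ^ a * |1 + v / u| ^ a := by
    rw [← Real.mul_rpow (abs_nonneg u) (abs_nonneg _), ← abs_mul, mul_add, mul_one,
      mul_div_cancel₀ _ hu]
  have hsplit : |u + δ| ^ a + |u - δ| ^ a - 2 * |u| ^ a =
      |u| ^ a * (|1 + δ / u| ^ a + |1 - δ / u| ^ a - 2) := by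
    rw [hscale, sub_eq_add_neg u, hscale, neg_div, ← sub_eq_add_neg]
    ring
  have hrpow : |u| ^ a * (δ / u) ^ 2 = δ ^ 2 * |u| ^ (a - 2) := by
    rw [Real.rpow_sub hu', Real.rpow_two, div_pow, ← sq_abs u]
    ring
  calc |(|u + δ| ^ a + |u - δ| ^ a - 2 * |u| ^ a)|
      = |u| ^ a * |(|1 + δ / u| ^ a + |1 - δ / u| ^ a - 2)| := by
        rw [hsplit, abs_mul, abs_of_nonneg (Real.rpow_nonneg (abs_nonneg u) a)]
    _ ≤ |u| ^ a * (18 * (δ / u) ^ 2) := by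
        gcongr
        exact abs_abs_one_add_rpow_add_abs_one_sub_rpow_sub_two_le ha0 ha2 _
    _ = 18 * δ ^ 2 * |u| ^ (a - 2) := by
        rw [mul_left_comm, hrpow, mul_assoc]

end RpowSecondDifference

lemma fbmCov_sub_fbmCov_sub_fbmCov_add_fbmCov (H s t ε : ℝ) :
    fbmCov H (t + ε) (s + ε) - fbmCov H (t + ε) (s - ε) - fbmCov H (t - ε) (s + ε) +
        fbmCov H (t - ε) (s - ε) =
      (|t - s + 2 * ε| ^ (2 * H) + |t - s - 2 * ε| ^ (2 * H) - 2 * |t - s| ^ (2 * H)) / 2 := by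
  unfold fbmCov
  rw [show t + ε - (s + ε) = t - s by ring, show t + ε - (s - ε) = t - s + 2 * ε by ring,
    show t - ε - (s + ε) = t - s - 2 * ε by ring, show t - ε - (s - ε) = t - s by ring]
  ring

theorem stmt14 {Ω : Type*} [MeasurableSpace Ω] (P : Measure Ω) [IsProbabilityMeasure P]
    (H : ℝ) (hH : H ∈ Set.Ioo (0:ℝ) 1) (B : ℝ → Ω → ℝ) (hB : IsFBM1 H P B) :
    ∃ C : ℝ, 0 < C ∧ ∀ ε : ℝ, 0 < ε → ∀ s t : ℝ, 0 ≤ s → s < t →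
      |∫ ω, ((B (t + ε) ω - B (t - ε) ω) / (2 * ε)) *
          ((B (s + ε) ω - B (s - ε) ω) / (2 * ε)) ∂P| ≤
        C * (t - s) ^ (2 * H - 2) := by
  refine ⟨9, by norm_num, fun ε hε s t _ hst => ?_⟩
  have hts : 0 < t - s := sub_pos.mpr hst
  have hbound := abs_abs_add_rpow_add_abs_sub_rpow_sub_two_mul_rpow_le (a := 2 * H)
    (by linarith [hH.1]) (by linarith [hH.2]) hts.ne' (2 * ε)
  rw [abs_of_pos hts] at hbound
  calc |∫ ω, ((B (t + ε) ω - B (t - ε) ω) / (2 * ε)) *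
          ((B (s + ε) ω - B (s - ε) ω) / (2 * ε)) ∂P|
      = |(|t - s + 2 * ε| ^ (2 * H) + |t - s - 2 * ε| ^ (2 * H) - 2 * (t - s) ^ (2 * H))| /
          (2 * (2 * ε) ^ 2) := by
        simp_rw [div_mul_div_comm]
        rw [integral_div, hB.integral_sub_mul_sub, fbmCov_sub_fbmCov_sub_fbmCov_add_fbmCov,
          abs_of_pos hts, abs_div, abs_div, abs_of_pos (by positivity : (0 : ℝ) < 2 * ε * (2 * ε))]
        ring
    _ ≤ 9 * (t - s) ^ (2 * H - 2) := by
        rw [div_le_iff₀ (by positivity)]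
        linarith
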